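/- For each choice of sign, the quantum determinant of L^±(u) is a scalar operator: in End(V) ⊗ ℂ[u,z_1,…,z_n,h] one has Σ_{σ∈S_N} sgn(σ) · L^±_{1,σ(1)}(u) ∘ L^±_{2,σ(2)}(u−h) ∘ ⋯ ∘ L^±_{N,σ(N)}(u−(N−1)h) = ∏_{a=1}^{n}(u−z_a+h) · ∏_{p=1}^{N−1} ∏_{a=1}^{n}(u−ph−z_a) · id_V. (Equivalently, the quantum determinant series A_N^±(u) acts on V-valued functions as multiplication by ∏_{a=1}^{n}(1 + h/(u−z_a)).) -/

import Mathlib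

/-!
Put the `N` auxiliary copies of `ℂ^N` side by side. The quantum determinant is then the
coefficient of `e_1 ⊗ ⋯ ⊗ e_N` in `L_1(u) L_2(u - h) ⋯ L_N(u - (N-1)h)` applied to the
antisymmetric vector `∑_σ sgn σ · e_{σ(1)} ⊗ ⋯ ⊗ e_{σ(N)} ⊗ v`, where `L_p` acts on the `p`-th
copy. Each `L_p(u - ph)` is a product over the sites `a` of `u - ph - z_a + h P^{(p,a)}`, and
factors with different rows and different sites commute, so the whole product can be regrouped
site by site. On antisymmetric vectors `P^{(p,a)} P^{(q,a)} = -P^{(q,a)}` for `p ≠ q` and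
`∑_q P^{(q,a)} = 1`; since the weights drop by `h` from one row to the next, the product over the
rows at site `a` therefore acts as the scalar `(u - z_a + h) ∏_{p=1}^{N-1} (u - ph - z_a)`.
-/

open scoped BigOperators

noncomputable section

namespace GRTV

/-- The polynomial ring `ℂ[z_1,…,z_n,h,u]`. -/
abbrev R (n : ℕ) : Type := MvPolynomial (Fin n ⊕ Fin 2) ℂ

def z {n : ℕ} (i : Fin n) : R n := MvPolynomial.X (Sum.inl i)
def hvar {n : ℕ} : R n := MvPolynomial.X (Sum.inr 0)
def uvar {n : ℕ} : R n := MvPolynomial.X (Sum.inr 1)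

/-- `V ⊗ ℂ[z,h,u]` in coordinates. -/
abbrev VV (n N : ℕ) : Type := (Fin n → Fin N) → R n

/-- `ℂ^N ⊗ V` (coefficients in `ℂ[z,h,u]`) in coordinates. -/
abbrev W (n N : ℕ) : Type := (Fin N × (Fin n → Fin N)) → R n

/-- The factor `(w − z_a + h P^{(0,a)})` acting on `ℂ^N ⊗ V`. -/
def fac0 {n N : ℕ} (w : R n) (a : Fin n) (f : W n N) : W n N :=
  fun x => (w - z a) * f x + hvar * f (x.2 a, Function.update x.2 a x.1)

/-- `L^±(w)`: `L^+(w) = (w−z_n+hP^{(0,n)})⋯(w−z_1+hP^{(0,1)})` and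
`L^−(w) = (w−z_1+hP^{(0,1)})⋯(w−z_n+hP^{(0,n)})`. -/
def Lop {n N : ℕ} (ε : Bool) (w : R n) : W n N → W n N :=
  if ε then (List.finRange n).foldl (fun g a => fac0 w a ∘ g) id
  else (List.finRange n).foldr (fun a g => fac0 w a ∘ g) id

/-- The matrix entry `L_{i,j}(w) ∈ End(V)`: `L_{i,j} v = π_i (L (e_j ⊗ v))`. -/
def entry {n N : ℕ} (L : W n N → W n N) (i j : Fin N) (v : VV n N) : VV n N :=
  fun m => L (fun x => if x.1 = j then v x.2 else 0) (i, m)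

/-- The quantum determinant
`Σ_{σ∈S_N} sgn(σ) L^±_{1,σ(1)}(u) ∘ L^±_{2,σ(2)}(u−h) ∘ ⋯ ∘ L^±_{N,σ(N)}(u−(N−1)h)`
as an operator on `V`-valued functions. -/
def qdet {n N : ℕ} (ε : Bool) (v : VV n N) : VV n N :=
  fun m => ∑ σ : Equiv.Perm (Fin N),
    ((Equiv.Perm.sign σ : ℤ) : R n) *
      ((List.finRange N).foldr
        (fun (p : Fin N) g => entry (Lop ε (uvar - ((p : ℕ) : R n) * hvar)) p (σ p) ∘ g) id) v m

end GRTV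

open Function Equiv

section ListProd

variable {M ι κ : Type*} [Monoid M]

theorem List.prod_map_mul_of_commute {x y : ι → M}
    (hxy : ∀ i j, i ≠ j → Commute (y i) (x j)) :
    ∀ {l : List ι}, l.Nodup → (l.map fun i => x i * y i).prod = (l.map x).prod * (l.map y).prod
  | [], _ => by simp
  | i :: l, hl => by
    obtain ⟨hi, hl⟩ := List.nodup_cons.mp hl
    have hcomm : Commute (y i) (l.map x).prod :=
      Commute.list_prod_right _ _ fun _ hj => by
        obtain ⟨j, hjl, rfl⟩ := List.mem_map.mp hj
        exact hxy i j fun h => hi (h ▸ hjl)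
    simp only [List.map_cons, List.prod_cons, List.prod_map_mul_of_commute hxy hl]
    rw [mul_assoc, ← mul_assoc (y i), hcomm.eq, mul_assoc, mul_assoc]

theorem List.prod_map_prod_map_comm {f : ι → κ → M}
    (hf : ∀ i j, i ≠ j → ∀ a b, a ≠ b → Commute (f i a) (f j b)) {l : List ι} (hl : l.Nodup) :
    ∀ {l' : List κ}, l'.Nodup →
      (l.map fun i => (l'.map (f i)).prod).prod = (l'.map fun a => (l.map (f · a)).prod).prod
  | [], _ => by simp
  | a :: l', hl' => by
    obtain ⟨ha, hl'⟩ := List.nodup_cons.mp hl'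
    simp only [List.map_cons, List.prod_cons]
    rw [List.prod_map_mul_of_commute _ hl, List.prod_map_prod_map_comm hf hl hl']
    intro i j hij
    refine Commute.list_prod_left _ _ fun _ hb => ?_
    obtain ⟨b, hbl, rfl⟩ := List.mem_map.mp hb
    exact hf i j hij b a fun h => ha (h ▸ hbl)

end ListProd

section EndList

variable {ι S V : Type*} [Semiring S] [AddCommMonoid V] [Module S V]

theorem Module.End.coe_list_prod_map (f : ι → Module.End S V) (l : List ι) :
    ⇑(l.map f).prod = l.foldr (fun i g => ⇑(f i) ∘ g) id := by
  induction l with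
  | nil => rfl
  | cons i l ih => rw [List.map_cons, List.prod_cons, Module.End.coe_mul, ih, List.foldr_cons]

end EndList

section ExchangeProduct

variable {S V ι : Type*} [CommRing S] [AddCommGroup V] [Module S V]

theorem Module.End.list_prod_map_apply_of_apply_eq_smul {l : List ι} {f : ι → Module.End S V}
    {c : ι → S} {g : V} (hf : ∀ i ∈ l, f i g = c i • g) :
    (l.map f).prod g = (l.map c).prod • g := by
  induction l with
  | nil => simp
  | cons i l ih =>
    simp only [List.forall_mem_cons] at hf
    simp only [List.map_cons, List.prod_cons, Module.End.mul_apply, ih hf.2, map_smul, hf.1,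
      smul_smul, mul_comm]

theorem Module.End.list_prod_map_smul_one_add_smul_apply [DecidableEq ι]
    (P : ι → Module.End S V) (w : ι → S) (h : S) {g : V}
    (hP : ∀ p q, p ≠ q → P p (P q g) = -P q g) :
    ∀ (p : ι) (ps : List ι), (p :: ps).Nodup → (p :: ps).IsChain (fun p q => w q = w p - h) →
      ((p :: ps).map fun q => w q • 1 + h • P q).prod g =
        (w p * (ps.map w).prod) • g + (h * (ps.map w).prod) • ∑ q ∈ (p :: ps).toFinset, P q g
  | p, [], _, _ => by simp
  | p, q :: qs, hnd, hchain => by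
    obtain ⟨hp, hnd⟩ := List.nodup_cons.mp hnd
    obtain ⟨hw, hchain⟩ := List.isChain_cons_cons.mp hchain
    have hPsum : P p (∑ r ∈ (q :: qs).toFinset, P r g) = -∑ r ∈ (q :: qs).toFinset, P r g := by
      rw [map_sum, ← Finset.sum_neg_distrib]
      exact Finset.sum_congr rfl fun r hr =>
        hP p r fun h => hp (h ▸ List.mem_toFinset.mp hr)
    rw [List.toFinset_cons (a := p), Finset.sum_insert (fun h => hp (List.mem_toFinset.mp h)),
      List.map_cons, List.prod_cons, Module.End.mul_apply,
      list_prod_map_smul_one_add_smul_apply P w h hP q qs hnd hchain]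
    simp only [LinearMap.add_apply, LinearMap.smul_apply, Module.End.one_apply, map_add,
      map_smul, hPsum, List.map_cons, List.prod_cons, hw]
    module

end ExchangeProduct

namespace GRTV

variable {n N : ℕ}

/-- `(ℂ^N)^{⊗N} ⊗ V` in coordinates: `k p` is the basis index in the copy of `ℂ^N` attached to
row `p`. -/
abbrev AuxV (n N : ℕ) : Type := ((Fin N → Fin N) × (Fin n → Fin N)) → R n

def exchange (p : Fin N) (a : Fin n) : Module.End (R n) (AuxV n N) :=
  LinearMap.funLeft (R n) (R n) fun km => (update km.1 p (km.2 a), update km.2 a (km.1 p))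

def rowFactor (p : Fin N) (w : R n) (a : Fin n) : Module.End (R n) (AuxV n N) :=
  (w - z a) • 1 + (hvar : R n) • exchange p a

theorem exchange_commute {p q : Fin N} {a b : Fin n} (hpq : p ≠ q) (hab : a ≠ b) :
    Commute (exchange p a) (exchange q b) := by
  refine LinearMap.ext fun F => funext fun ⟨k, m⟩ => ?_
  simp [exchange, LinearMap.funLeft_apply, update_of_ne hpq, update_of_ne hab,
    update_of_ne hpq.symm, update_of_ne hab.symm, update_comm hpq, update_comm hab]

theorem rowFactor_commute {p q : Fin N} {a b : Fin n} (hpq : p ≠ q) (hab : a ≠ b) (w w' : R n) :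
    Commute (rowFactor p w a) (rowFactor q w' b) := by
  have h := exchange_commute hpq hab
  unfold rowFactor
  exact ((Commute.one_left _).smul_left _).add_left
    ((((Commute.one_right _).smul_right _).add_right (h.smul_right _)).smul_left _)

/-- An operator on `ℂ^N ⊗ V`, acting on the copy of `ℂ^N` attached to row `p`. -/
def rowLift (p : Fin N) : Module.End (R n) (W n N) →* Module.End (R n) (AuxV n N) where
  toFun L := LinearMap.pi fun km => LinearMap.proj (km.1 p, km.2) ∘ₗ L ∘ₗ
    LinearMap.funLeft (R n) (R n) fun x => (update km.1 p x.1, x.2)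
  map_one' := LinearMap.ext fun F => funext fun ⟨k, m⟩ => by simp
  map_mul' L L' := LinearMap.ext fun F => funext fun ⟨k, m⟩ => by
    show L (L' _) _ = L _ _
    exact congrFun (congrArg L (funext fun x => by simp)) _

theorem rowLift_apply (p : Fin N) (L : Module.End (R n) (W n N)) (F : AuxV n N)
    (k : Fin N → Fin N) (m : Fin n → Fin N) :
    rowLift p L F (k, m) = L (fun x => F (update k p x.1, x.2)) (k p, m) := rfl

def fac0Lin (w : R n) (a : Fin n) : Module.End (R n) (W n N) :=
  (w - z a) • 1 +
    (hvar : R n) • LinearMap.funLeft (R n) (R n)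
      fun x : Fin N × (Fin n → Fin N) => (x.2 a, update x.2 a x.1)

theorem coe_fac0Lin (w : R n) (a : Fin n) : ⇑(fac0Lin (N := N) w a) = fac0 w a := rfl

theorem rowLift_fac0Lin (p : Fin N) (w : R n) (a : Fin n) :
    rowLift p (fac0Lin w a) = rowFactor p w a := by
  refine LinearMap.ext fun F => funext fun ⟨k, m⟩ => ?_
  simp [rowLift_apply, fac0Lin, rowFactor, exchange]

def sites (n : ℕ) (ε : Bool) : List (Fin n) :=
  if ε then (List.finRange n).reverse else List.finRange n

theorem sites_nodup (n : ℕ) (ε : Bool) : (sites n ε).Nodup := by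
  cases ε <;> simp [sites, List.nodup_finRange]

def LopLin (ε : Bool) (w : R n) : Module.End (R n) (W n N) := ((sites n ε).map (fac0Lin w)).prod

theorem coe_LopLin (ε : Bool) (w : R n) : ⇑(LopLin (N := N) ε w) = Lop ε w := by
  cases ε
  · simp [LopLin, sites, Lop, Module.End.coe_list_prod_map, coe_fac0Lin]
  · rw [LopLin, sites, if_pos rfl, Module.End.coe_list_prod_map, List.foldr_reverse]
    rfl

theorem rowLift_LopLin (p : Fin N) (ε : Bool) (w : R n) :
    rowLift p (LopLin ε w) = ((sites n ε).map (rowFactor p w)).prod := by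
  simp [LopLin, map_list_prod, List.map_map, Function.comp_def, rowLift_fac0Lin]

theorem prod_rowLift_LopLin (ε : Bool) (w : Fin N → R n) :
    ((List.finRange N).map fun p => rowLift p (LopLin ε (w p))).prod =
      ((sites n ε).map fun a =>
        ((List.finRange N).map fun p => rowFactor p (w p) a).prod).prod := by
  simp only [rowLift_LopLin]
  exact List.prod_map_prod_map_comm (fun p q hpq a b hab => rowFactor_commute hpq hab _ _)
    (List.nodup_finRange N) (sites_nodup n ε)

def IsAntisymm (g : AuxV n N) : Prop :=
  ∀ i j : Fin N, i ≠ j → ∀ k m, g (k ∘ swap i j, m) = -g (k, m)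

theorem IsAntisymm.apply_eq_zero {g : AuxV n N} (hg : IsAntisymm g) {i j : Fin N} (hij : i ≠ j)
    {k : Fin N → Fin N} (hk : k i = k j) (m : Fin n → Fin N) : g (k, m) = 0 := by
  have h := hg i j hij k m
  rw [comp_swap_eq_update, hk, update_eq_self, ← hk, update_eq_self] at h
  exact self_eq_neg.mp h

theorem IsAntisymm.exchange_exchange {g : AuxV n N} (hg : IsAntisymm g) {p q : Fin N}
    (hpq : p ≠ q) (a : Fin n) : exchange p a (exchange q a g) = -exchange q a g := by
  funext ⟨k, m⟩
  have hk : update k q (m a) ∘ swap p q = update (update k p (m a)) q (k p) := by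
    rw [comp_swap_eq_update, update_self, update_of_ne hpq, update_idem, update_comm hpq.symm]
  simp [exchange, LinearMap.funLeft_apply, ← hg p q hpq, hk, update_of_ne hpq.symm]

theorem IsAntisymm.sum_exchange {g : AuxV n N} (hg : IsAntisymm g) (a : Fin n) :
    ∑ q, exchange q a g = g := by
  funext ⟨k, m⟩
  simp only [Finset.sum_apply, exchange, LinearMap.funLeft_apply]
  by_cases hinj : Injective k
  · obtain ⟨q₀, hq₀⟩ := (Finite.injective_iff_surjective.mp hinj) (m a)
    rw [Finset.sum_eq_single q₀
      (fun q _ hq => hg.apply_eq_zero hq (by simp [update_of_ne hq.symm, hq₀]) _) (by simp),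
      ← hq₀, update_eq_self, hq₀, update_eq_self]
  · obtain ⟨i, j, hkij, hij⟩ := not_injective_iff.mp hinj
    rw [hg.apply_eq_zero hij hkij, ← Finset.sum_subset (Finset.subset_univ {i, j})
      (fun q _ hq => hg.apply_eq_zero hij (by simp_all [update_of_ne, eq_comm]) _),
      Finset.sum_pair hij, hkij]
    have hswap : update k i (m a) ∘ swap i j = update k j (m a) := by
      rw [comp_swap_eq_update, update_self, update_of_ne hij.symm, update_comm hij, update_idem,
        ← hkij]
      exact update_eq_self_iff.mpr (update_of_ne hij _ _).symm
    rw [← hswap, hg i j hij, add_neg_cancel]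

def qdetFactor (N : ℕ) (a : Fin n) : R n :=
  (uvar - z a + hvar) * ∏ p ∈ Finset.Ico 1 N, (uvar - (p : R n) * hvar - z a)

theorem list_prod_rowFactor_apply {g : AuxV n N} (hg : IsAntisymm g) (a : Fin n) :
    ((List.finRange N).map fun p => rowFactor p (uvar - ((p : ℕ) : R n) * hvar) a).prod g =
      qdetFactor N a • g := by
  cases N with
  | zero =>
    have hg0 : g = 0 := by simpa using (hg.sum_exchange a).symm
    simp [hg0]
  | succ N =>
    set w : Fin (N + 1) → R n := fun p => uvar - ((p : ℕ) : R n) * hvar - z a with hw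
    have hchain : (List.finRange (N + 1)).IsChain (fun p q => w q = w p - hvar) := by
      rw [List.isChain_iff_getElem]
      intro i hi
      simp [hw, List.getElem_finRange]
      ring
    rw [List.finRange_succ] at hchain
    have key := Module.End.list_prod_map_smul_one_add_smul_apply (fun p => exchange p a) w hvar
      (fun p q hpq => hg.exchange_exchange hpq a) 0 _
      (List.finRange_succ ▸ List.nodup_finRange _) hchain
    rw [← List.finRange_succ, List.toFinset_finRange, hg.sum_exchange] at key
    simp only [rowFactor]
    rw [key, ← add_smul]
    congr 1
    have hW : ((List.finRange N).map Fin.succ).map w =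
        (List.finRange N).map fun i : Fin N => uvar - ((i + 1 : ℕ) : R n) * hvar - z a := by
      simp [hw, Function.comp_def]
    rw [hW, ← Fin.prod_univ_def,
      Fin.prod_univ_eq_prod_range (fun i => uvar - ((i + 1 : ℕ) : R n) * hvar - z a),
      qdetFactor, Finset.prod_Ico_eq_prod_range, Nat.add_sub_cancel]
    simp only [hw, Fin.val_zero, Nat.cast_zero, add_comm 1]
    ring

/-- `e_{σ p}` in the copy of `ℂ^N` of every row `p ∈ ps`, tensored with `v`. -/
def pinRows (σ : Perm (Fin N)) (ps : List (Fin N)) (v : VV n N) : AuxV n N :=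
  fun km => if ∀ p ∈ ps, km.1 p = σ p then v km.2 else 0

theorem pinRows_cons (σ : Perm (Fin N)) (p : Fin N) (ps : List (Fin N)) (v : VV n N) :
    pinRows σ (p :: ps) v = fun km => if km.1 p = σ p then pinRows σ ps v km else 0 := by
  funext km
  simp only [pinRows, List.forall_mem_cons, ite_and]

theorem rowLift_ite_row {p q : Fin N} (hqp : q ≠ p) (L : Module.End (R n) (W n N)) (s : Fin N)
    (F : AuxV n N) :
    rowLift q L (fun km => if km.1 p = s then F km else 0) =
      fun km => if km.1 p = s then rowLift q L F km else 0 := by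
  funext ⟨k, m⟩
  simp only [rowLift_apply, update_of_ne hqp.symm]
  split_ifs
  · rfl
  · exact congrFun (map_zero L) _

theorem list_prod_rowLift_ite_row (L : Fin N → Module.End (R n) (W n N)) {p : Fin N} (s : Fin N)
    (F : AuxV n N) : ∀ {ps : List (Fin N)}, p ∉ ps →
      (ps.map fun q => rowLift q (L q)).prod (fun km => if km.1 p = s then F km else 0) =
        fun km => if km.1 p = s then (ps.map fun q => rowLift q (L q)).prod F km else 0
  | [], _ => rfl
  | q :: ps, hp => by
    simp only [List.map_cons, List.prod_cons, Module.End.mul_apply]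
    rw [list_prod_rowLift_ite_row L s F fun h => hp (List.mem_cons_of_mem q h),
      rowLift_ite_row fun h : q = p => hp (h ▸ List.mem_cons_self)]

theorem foldr_entry_apply (L : Fin N → Module.End (R n) (W n N)) (σ : Perm (Fin N))
    (v : VV n N) :
    ∀ {ps : List (Fin N)}, ps.Nodup → ∀ {k : Fin N → Fin N}, (∀ p ∈ ps, k p = p) →
      ∀ m, (ps.foldr (fun p g => entry (L p) p (σ p) ∘ g) id) v m =
        (ps.map fun p => rowLift p (L p)).prod (pinRows σ ps v) (k, m)
  | [], _, k, _, m => by simp [pinRows]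
  | p :: ps, hnd, k, hk, m => by
    obtain ⟨hp, hnd⟩ := List.nodup_cons.mp hnd
    simp only [List.foldr_cons, comp_apply, List.map_cons, List.prod_cons, Module.End.mul_apply,
      rowLift_apply, pinRows_cons, list_prod_rowLift_ite_row _ _ _ hp, entry,
      hk p List.mem_cons_self, update_self]
    refine congrFun (congrArg (L p) (funext fun x => ?_)) _
    split_ifs
    · exact foldr_entry_apply L σ v hnd (fun q hq => by
        rw [update_of_ne (fun h : q = p => hp (h ▸ hq)), hk q (List.mem_cons_of_mem p hq)]) x.2
    · rfl

def antisymVec (v : VV n N) : AuxV n N :=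
  ∑ σ : Perm (Fin N), ((Perm.sign σ : ℤ) : R n) • pinRows σ (List.finRange N) v

theorem antisymVec_apply (v : VV n N) (k : Fin N → Fin N) (m : Fin n → Fin N) :
    antisymVec v (k, m) =
      ∑ σ : Perm (Fin N), ((Perm.sign σ : ℤ) : R n) * if k = σ then v m else 0 := by
  simp [antisymVec, pinRows, funext_iff]

theorem antisymVec_apply_id (v : VV n N) (m : Fin n → Fin N) : antisymVec v (id, m) = v m := by
  rw [antisymVec_apply, Finset.sum_eq_single 1 (fun σ _ hσ => by
    rw [if_neg fun h => hσ (DFunLike.coe_injective (h.symm.trans Perm.coe_one.symm)), mul_zero])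
    (by simp)]
  simp

theorem isAntisymm_antisymVec (v : VV n N) : IsAntisymm (antisymVec v) := by
  intro i j hij k m
  simp only [antisymVec_apply, ← Finset.sum_neg_distrib]
  refine Fintype.sum_equiv (Equiv.mulRight (swap i j)) _ _ fun σ => ?_
  have hk : k ∘ swap i j = σ ↔ k = σ ∘ swap i j := by
    constructor
    · rintro h; rw [← h]; funext x; simp
    · rintro rfl; funext x; simp
  rw [coe_mulRight, Perm.sign_mul, Perm.sign_swap hij, Perm.coe_mul, if_congr hk rfl rfl]
  push_cast
  ring

theorem qdet_apply (ε : Bool) (v : VV n N) (m : Fin n → Fin N) :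
    qdet ε v m = ((List.finRange N).map fun p =>
      rowLift p (LopLin ε (uvar - ((p : ℕ) : R n) * hvar))).prod (antisymVec v) (id, m) := by
  simp only [qdet, antisymVec, map_sum, map_smul, Finset.sum_apply, Pi.smul_apply, smul_eq_mul]
  refine Finset.sum_congr rfl fun σ _ => congrArg _ ?_
  rw [← foldr_entry_apply _ σ v (List.nodup_finRange N) (k := id) (fun p _ => rfl)]
  simp only [coe_LopLin]

theorem list_prod_map_sites (ε : Bool) (f : Fin n → R n) :
    ((sites n ε).map f).prod = ∏ a, f a := by
  cases ε <;> simp [sites, Fin.prod_univ_def, List.prod_reverse]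

/-- the quantum determinant of `L^±(u)` is the scalar operator
`∏_{a=1}^n (u−z_a+h) · ∏_{p=1}^{N−1} ∏_{a=1}^n (u−ph−z_a) · id_V`. -/
theorem statement14 (n N : ℕ) (ε : Bool) (v : VV n N) :
    qdet ε v =
      fun m => ((∏ a : Fin n, (uvar - z a + hvar)) *
        ∏ p ∈ Finset.Ico 1 N, ∏ a : Fin n, (uvar - (p : R n) * hvar - z a)) * v m := by
  funext m
  rw [qdet_apply, prod_rowLift_LopLin, Module.End.list_prod_map_apply_of_apply_eq_smul
      fun a _ => list_prod_rowFactor_apply (isAntisymm_antisymVec v) a,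
    Pi.smul_apply, antisymVec_apply_id, smul_eq_mul, list_prod_map_sites]
  simp only [qdetFactor, Finset.prod_mul_distrib]
  rw [Finset.prod_comm]

end GRTV
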